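/- For u ∈ ℝ^N, sparsemax(u) (as defined with κ* from the top-k threshold) equals the Euclidean projection of u/(2N) onto the probability simplex Δ^N: sparsemax(u) = argmin_{p ∈ Δ^N} ‖p − u/(2N)‖₂². -/

import Mathlib

open Finset

/-- Threshold set for sparsemax: `j : Fin N` encodes support size `j+1`. -/
noncomputable def thresholdSet (N : ℕ) (w : Fin N → ℝ) (ρ : Equiv.Perm (Fin N)) : Finset (Fin N) :=
  Finset.univ.filter
    (fun j => (∑ i ∈ Finset.Iic j, w (ρ i)) < 2 * (N : ℝ) + ((j : ℝ) + 1) * w (ρ j))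

/-!
With `κ` the threshold and `k` the last index of the sorted support, every sorted entry up to `k`
exceeds `κ` and every later one is at most `κ`: for `k + 1` this is the failure of the threshold
condition, and sortedness propagates it. Hence `∑ max 0 (u i - κ) = 2N`, i.e. `s = max 0 (v - τ)`
with `v = u / 2N`, `τ = κ / 2N` lies in the simplex. Such an `s` satisfies the obtuse-angle
condition `⟪p - s, s - v⟫ ≥ 0` for every `p` in the simplex, because `s - v ≥ -τ` with equality
on the support of `s`; so `s` is the projection of `v`.
-/

section SimplexProjection

variable {ι : Type*} [Fintype ι]

theorem sum_sq_sub_le_of_sum_mul_nonneg {p s v : ι → ℝ}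
    (h : 0 ≤ ∑ i, (p i - s i) * (s i - v i)) :
    ∑ i, (s i - v i) ^ 2 ≤ ∑ i, (p i - v i) ^ 2 :=
  calc ∑ i, (s i - v i) ^ 2
      ≤ ∑ i, ((s i - v i) ^ 2 + (p i - s i) ^ 2 + 2 * ((p i - s i) * (s i - v i))) := by
        rw [sum_add_distrib, sum_add_distrib, ← mul_sum]
        linarith [sum_nonneg fun i (_ : i ∈ univ) => sq_nonneg (p i - s i)]
    _ = ∑ i, (p i - v i) ^ 2 := sum_congr rfl fun i _ => by ring

theorem neg_le_max_zero_sub_sub (v τ : ℝ) : -τ ≤ max 0 (v - τ) - v := by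
  rcases le_total (v - τ) 0 with h | h
  · rw [max_eq_left h]; linarith
  · rw [max_eq_right h]; linarith

theorem max_zero_sub_mul_max_zero_sub_sub (v τ : ℝ) :
    max 0 (v - τ) * (max 0 (v - τ) - v) = -τ * max 0 (v - τ) := by
  rcases le_total (v - τ) 0 with h | h
  · rw [max_eq_left h]; ring
  · rw [max_eq_right h]; ring

theorem max_zero_sub_mem_stdSimplex {v : ι → ℝ} {τ : ℝ} (h : ∑ i, max 0 (v i - τ) = 1) :
    (fun i => max 0 (v i - τ)) ∈ stdSimplex ℝ ι :=
  ⟨fun _ => le_max_left _ _, h⟩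

theorem sum_sub_mul_max_zero_sub_nonneg {v p : ι → ℝ} {τ : ℝ}
    (h : ∑ i, max 0 (v i - τ) = 1) (hp : p ∈ stdSimplex ℝ ι) :
    0 ≤ ∑ i, (p i - max 0 (v i - τ)) * (max 0 (v i - τ) - v i) := by
  have hs : ∑ i, max 0 (v i - τ) * (max 0 (v i - τ) - v i) = -τ := by
    simp_rw [max_zero_sub_mul_max_zero_sub_sub, ← mul_sum, h, mul_one]
  have hp' : -τ ≤ ∑ i, p i * (max 0 (v i - τ) - v i) :=
    calc -τ = ∑ i, p i * -τ := by rw [← sum_mul, hp.2, one_mul]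
      _ ≤ _ := sum_le_sum fun i _ =>
        mul_le_mul_of_nonneg_left (neg_le_max_zero_sub_sub (v i) τ) (hp.1 i)
  simp_rw [sub_mul, sum_sub_distrib, hs]
  linarith

theorem sum_sq_max_zero_sub_sub_le {v p : ι → ℝ} {τ : ℝ}
    (h : ∑ i, max 0 (v i - τ) = 1) (hp : p ∈ stdSimplex ℝ ι) :
    ∑ i, (max 0 (v i - τ) - v i) ^ 2 ≤ ∑ i, (p i - v i) ^ 2 :=
  sum_sq_sub_le_of_sum_mul_nonneg (sum_sub_mul_max_zero_sub_nonneg h hp)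

end SimplexProjection

theorem sum_max_zero_sub_eq_sum_Iic {ι : Type*} [Fintype ι] [LinearOrder ι]
    [LocallyFiniteOrderBot ι] {w : ι → ℝ} {κ : ℝ} {k : ι}
    (hle : ∀ j ≤ k, κ ≤ w j) (hge : ∀ j, k < j → w j ≤ κ) :
    ∑ j, max 0 (w j - κ) = ∑ j ∈ Iic k, (w j - κ) := by
  rw [← sum_subset (subset_univ (Iic k)) fun j _ hj =>
    max_eq_left (sub_nonpos.2 (hge j (not_le.1 (mem_Iic.not.1 hj))))]
  exact sum_congr rfl fun j hj => max_eq_right (sub_nonneg.2 (hle j (mem_Iic.1 hj)))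

section Sparsemax

variable {N : ℕ} {u : Fin N → ℝ} {ρ : Equiv.Perm (Fin N)}

/-- The paper's `κ*`; its `k` is `(thresholdSet N u ρ).max' hne + 1`. -/
noncomputable def sparsemaxThreshold (hne : (thresholdSet N u ρ).Nonempty) : ℝ :=
  ((∑ l ∈ Iic ((thresholdSet N u ρ).max' hne), u (ρ l)) - 2 * N) /
    (((thresholdSet N u ρ).max' hne : ℝ) + 1)

theorem sparsemaxThreshold_lt (hne : (thresholdSet N u ρ).Nonempty) :
    sparsemaxThreshold hne < u (ρ ((thresholdSet N u ρ).max' hne)) := by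
  have hk := (mem_filter.1 ((thresholdSet N u ρ).max'_mem hne)).2
  rw [sparsemaxThreshold, div_lt_iff₀ (by positivity)]
  linarith

theorem le_sparsemaxThreshold (hsort : Antitone (fun i => u (ρ i)))
    (hne : (thresholdSet N u ρ).Nonempty) {j : Fin N}
    (hj : (thresholdSet N u ρ).max' hne < j) : u (ρ j) ≤ sparsemaxThreshold hne := by
  set k := (thresholdSet N u ρ).max' hne
  let k' : Fin N := ⟨k + 1, by omega⟩
  have hkk' : k < k' := Fin.lt_def.2 (Nat.lt_succ_self k)
  have hIic : Iic k' = insert k' (Iic k) := by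
    ext l
    simp only [mem_Iic, mem_insert, Fin.le_def, Fin.ext_iff, k']
    omega
  have hk' : 2 * (N : ℝ) + ((k' : ℝ) + 1) * u (ρ k') ≤ ∑ l ∈ Iic k', u (ρ l) := by
    have := mt ((thresholdSet N u ρ).le_max' k') (not_le.2 hkk')
    simpa [thresholdSet] using this
  rw [hIic, sum_insert (by simp [hkk'])] at hk'
  have hk'val : ((k' : ℕ) : ℝ) = (k : ℝ) + 1 := by simp [k']
  calc u (ρ j) ≤ u (ρ k') := hsort (Fin.le_def.2 (Fin.lt_def.1 hj))
    _ ≤ sparsemaxThreshold hne := by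
      rw [sparsemaxThreshold, le_div_iff₀ (by positivity)]
      rw [hk'val] at hk'
      linarith

theorem sum_max_zero_sub_sparsemaxThreshold (hsort : Antitone (fun i => u (ρ i)))
    (hne : (thresholdSet N u ρ).Nonempty) :
    ∑ i, max 0 (u i - sparsemaxThreshold hne) = 2 * N := by
  set k := (thresholdSet N u ρ).max' hne
  have hκ : sparsemaxThreshold hne * ((k : ℝ) + 1) = ∑ l ∈ Iic k, u (ρ l) - 2 * N :=
    div_mul_cancel₀ _ (by positivity)
  rw [← Equiv.sum_comp ρ, sum_max_zero_sub_eq_sum_Iic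
    (fun j hj => (sparsemaxThreshold_lt hne).le.trans (hsort hj))
    (fun j hj => le_sparsemaxThreshold hsort hne hj),
    sum_sub_distrib, sum_const, Fin.card_Iic, nsmul_eq_mul]
  push_cast
  linarith

end Sparsemax

theorem sparsemax_eq_projection_general (N : ℕ) (u : Fin N → ℝ)
    (ρ : Equiv.Perm (Fin N)) (hsort : Antitone (fun i => u (ρ i)))
    (hne : (thresholdSet N u ρ).Nonempty) :
    (fun i => max 0 (u i -
        ((∑ l ∈ Finset.Iic ((thresholdSet N u ρ).max' hne), u (ρ l)) - 2 * N) /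
          (((thresholdSet N u ρ).max' hne : ℝ) + 1)) / (2 * N)) ∈ stdSimplex ℝ (Fin N) ∧
    ∀ p ∈ stdSimplex ℝ (Fin N),
      (∑ i, ((max 0 (u i -
          ((∑ l ∈ Finset.Iic ((thresholdSet N u ρ).max' hne), u (ρ l)) - 2 * N) /
            (((thresholdSet N u ρ).max' hne : ℝ) + 1)) / (2 * N)) - u i / (2 * N)) ^ 2) ≤
        ∑ i, (p i - u i / (2 * N)) ^ 2 := by
  change (fun i => max 0 (u i - sparsemaxThreshold hne) / (2 * N)) ∈ _ ∧ ∀ p ∈ _,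
    ∑ i, (max 0 (u i - sparsemaxThreshold hne) / (2 * N) - u i / (2 * N)) ^ 2 ≤ _
  have hN : (0 : ℝ) < 2 * N := by have := ((thresholdSet N u ρ).max' hne).pos; positivity
  have hscale : ∀ i, max 0 (u i - sparsemaxThreshold hne) / (2 * N) =
      max 0 (u i / (2 * N) - sparsemaxThreshold hne / (2 * N)) := fun i => by
    rw [← max_div_div_right hN.le, zero_div, sub_div]
  have hsum : ∑ i, max 0 (u i / (2 * N) - sparsemaxThreshold hne / (2 * N)) = 1 := by
    simp_rw [← hscale, ← sum_div, sum_max_zero_sub_sparsemaxThreshold hsort hne, div_self hN.ne']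
  simp_rw [hscale]
  exact ⟨max_zero_sub_mem_stdSimplex hsum, fun p hp => sum_sq_max_zero_sub_sub_le hsum hp⟩

/-- `sparsemax(u)` (defined via the top-`k` threshold `κ*`) is the Euclidean projection of
`u/(2N)` onto the probability simplex: it lies in `Δ^N` and minimizes `‖p − u/(2N)‖₂²`. -/
theorem sparsemax_eq_projection (N : ℕ) (hN : 0 < N) (u : Fin N → ℝ)
    (ρ : Equiv.Perm (Fin N)) (hsort : Antitone (fun i => u (ρ i)))
    (hne : (thresholdSet N u ρ).Nonempty) :
    (fun i => max 0 (u i -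
        ((∑ l ∈ Finset.Iic ((thresholdSet N u ρ).max' hne), u (ρ l)) - 2 * N) /
          (((thresholdSet N u ρ).max' hne : ℝ) + 1)) / (2 * N)) ∈ stdSimplex ℝ (Fin N) ∧
    ∀ p ∈ stdSimplex ℝ (Fin N),
      (∑ i, ((max 0 (u i -
          ((∑ l ∈ Finset.Iic ((thresholdSet N u ρ).max' hne), u (ρ l)) - 2 * N) /
            (((thresholdSet N u ρ).max' hne : ℝ) + 1)) / (2 * N)) - u i / (2 * N)) ^ 2) ≤
        ∑ i, (p i - u i / (2 * N)) ^ 2 :=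
  sparsemax_eq_projection_general N u ρ hsort hne
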